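/- arXiv:1902.00721 — 3 statements merged into one kernel-verified Lean document; each statement's English description precedes it below -/
import Mathlib

section
/- In the q-shuffle algebra V on generators x,y, define alternating words W₀=x, W₁=y, and for k∈ℕ: W_{−k} = xyx⋯x (x-degree k+1, y-degree k), W_{k+1} = yxy⋯y (x-degree k, y-degree k+1), G_k = (yx)^k, G̃_k = (xy)^k (with G₀ = G̃₀ = 1). Then for all k ∈ ℕ: [W₀, W_{k+1}]_⋆ = [W_{−k}, W₁]_⋆ = (1−q⁻²)(G̃_{k+1} − G_{k+1}), where [a,b]_⋆ = a⋆b − b⋆a. -/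
noncomputable section

/-- Words in the letters `x` (= `false`) and `y` (= `true`). -/
abbrev Wd := List Bool

/-- The underlying vector space of the free algebra `F⟨x,y⟩`,
with the words as a basis. -/
abbrev V (F : Type*) [Field F] := Wd →₀ F

/-- The pairing `⟨u,v⟩` on letters: `2` if equal, `-2` if distinct. -/
def pr (a b : Bool) : ℤ := if a = b then 2 else -2

/-- `⟨u₁,b⟩ + ⟨u₂,b⟩ + ⋯ + ⟨u_r,b⟩` for a word `u` and a letter `b`. -/
def wsum (u : Wd) (b : Bool) : ℤ := (u.map fun a => pr a b).sum

variable {F : Type*} [Field F]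

/-- Left multiplication by a letter, in the free (concatenation) algebra. -/
def lmul (a : Bool) (f : V F) : V F := Finsupp.mapDomain (fun w => a :: w) f

/-- The `q`-shuffle product of two words (as an element of `V F`), defined by
Rosso's recursion
`u ⋆ v = u₁((u₂⋯u_r) ⋆ v) + q^{⟨u₁,v₁⟩+⋯+⟨u_r,v₁⟩} v₁(u ⋆ (v₂⋯v_s))`. -/
def sh (q : F) : Wd → Wd → V F
  | [], v => Finsupp.single v 1
  | u@(_ :: _), [] => Finsupp.single u 1
  | a :: u', b :: v' =>
      lmul a (sh q u' (b :: v')) +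
        q ^ wsum (a :: u') b • lmul b (sh q (a :: u') v')
  termination_by u v => u.length + v.length
  decreasing_by all_goals (simp only [List.length_cons]; omega)

/-- The `q`-shuffle product on `V F`, extended bilinearly from words. -/
def st (q : F) (f g : V F) : V F :=
  f.sum fun u cu => g.sum fun v cv => (cu * cv) • sh q u v

/-- The concatenation (free-algebra) product on `V F`. -/
def cm (f g : V F) : V F :=
  f.sum fun u cu => g.sum fun v cv => Finsupp.single (u ++ v) (cu * cv)

/-- Powers with respect to the concatenation product. -/
def cpow (f : V F) : ℕ → V F
  | 0 => Finsupp.single [] 1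
  | n + 1 => cm f (cpow f n)

/-- The alternating word `W_{-k} = xyx⋯x` of length `2k+1`. -/
def altX : ℕ → Wd
  | 0 => [false]
  | k + 1 => false :: true :: altX k

/-- The alternating word `W_{k+1} = yxy⋯y` of length `2k+1`. -/
def altY : ℕ → Wd
  | 0 => [true]
  | k + 1 => true :: false :: altY k

/-- The alternating word `G_k = (yx)^k`. -/
def gw : ℕ → Wd
  | 0 => []
  | k + 1 => true :: false :: gw k

/-- The alternating word `G̃_k = (xy)^k`. -/
def gtw : ℕ → Wd
  | 0 => []
  | k + 1 => false :: true :: gtw k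

/-- `W_{-k}` as an element of `V F`. -/
def Wm (F : Type*) [Field F] (k : ℕ) : V F := Finsupp.single (altX k) 1

/-- `W_{k+1}` as an element of `V F`. -/
def Wp (F : Type*) [Field F] (k : ℕ) : V F := Finsupp.single (altY k) 1

/-- `G_k` as an element of `V F`. -/
def Gn (F : Type*) [Field F] (k : ℕ) : V F := Finsupp.single (gw k) 1

/-- `G̃_k` as an element of `V F`. -/
def Gt (F : Type*) [Field F] (k : ℕ) : V F := Finsupp.single (gtw k) 1
/-!
Inserting a letter `x` into an alternating word `v` gives the expansions
`x ⋆ v = ∑ᵢ q^{⟨x, v₁⋯vᵢ⟩} v₁⋯vᵢ x vᵢ₊₁⋯vₙ` and `v ⋆ x = ∑ᵢ q^{⟨vᵢ₊₁⋯vₙ, x⟩} v₁⋯vᵢ x vᵢ₊₁⋯vₙ`.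
In the commutator, inserting `x` just before or just after an `x` of `v` yields the same word
with coefficients `±(1 - q⁻²)`, which cancel; only the insertions at the two ends survive,
giving `(1 - q⁻²)(x v - v x)`. The induction peels off two letters at a time and is done for an
arbitrary inserted letter, which covers both `[W₀, W_{k+1}]` and `[W_{-k}, W₁]`.
-/

namespace QShuffle

variable {F : Type*} [Field F]

lemma lmul_eq_lmapDomain (a : Bool) (f : V F) :
    lmul a f = Finsupp.lmapDomain F F (List.cons a) f := rfl

lemma lmul_single (a : Bool) (w : Wd) (c : F) :
    lmul a (Finsupp.single w c) = Finsupp.single (a :: w) c :=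
  Finsupp.mapDomain_single

@[simp] lemma pr_self (a : Bool) : pr a a = 2 := if_pos rfl

@[simp] lemma pr_not_left (a : Bool) : pr (!a) a = -2 := by cases a <;> rfl

@[simp] lemma pr_not_right (a : Bool) : pr a (!a) = -2 := by cases a <;> rfl

lemma wsum_cons (a : Bool) (u : Wd) (b : Bool) : wsum (a :: u) b = pr a b + wsum u b := by
  simp [wsum]

lemma wsum_singleton (a b : Bool) : wsum [a] b = pr a b := by
  simp [wsum]

lemma sh_nil_left (q : F) (v : Wd) : sh q [] v = Finsupp.single v 1 := by
  rw [sh]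

lemma sh_singleton_cons (q : F) (a b : Bool) (v : Wd) :
    sh q [a] (b :: v) =
      Finsupp.single (a :: b :: v) 1 + q ^ pr a b • lmul b (sh q [a] v) := by
  rw [sh, sh_nil_left, lmul_single, wsum_singleton]

lemma sh_cons_singleton (q : F) (a b : Bool) (u : Wd) :
    sh q (b :: u) [a] =
      lmul b (sh q u [a]) + q ^ wsum (b :: u) a • Finsupp.single (a :: b :: u) 1 := by
  rw [sh, sh, lmul_single]

lemma st_single_one (q : F) (u v : Wd) :
    st q (Finsupp.single u 1) (Finsupp.single v 1) = sh q u v := by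
  simp [st, Finsupp.sum_single_index]

def altOdd (a : Bool) : ℕ → Wd
  | 0 => [a]
  | k + 1 => a :: (!a) :: altOdd a k

def altEven (a : Bool) : ℕ → Wd
  | 0 => []
  | k + 1 => a :: (!a) :: altEven a k

lemma altEven_succ (a : Bool) (k : ℕ) : altEven a (k + 1) = a :: altOdd (!a) k := by
  induction k with
  | zero => rfl
  | succ k ih => rw [altEven, ih, altOdd, Bool.not_not]

lemma wsum_altOdd_not (a : Bool) (k : ℕ) : wsum (altOdd a k) (!a) = -2 := by
  induction k with
  | zero => simp [altOdd, wsum]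
  | succ k ih => simp [altOdd, wsum_cons, ih]

lemma altOdd_true (k : ℕ) : altOdd true k = altY k := by
  induction k with
  | zero => rfl
  | succ k ih => rw [altOdd, altY, ih, Bool.not_true]

lemma altOdd_false (k : ℕ) : altOdd false k = altX k := by
  induction k with
  | zero => rfl
  | succ k ih => rw [altOdd, altX, ih, Bool.not_false]

lemma altEven_true (k : ℕ) : altEven true k = gw k := by
  induction k with
  | zero => rfl
  | succ k ih => rw [altEven, gw, ih, Bool.not_true]

lemma altEven_false (k : ℕ) : altEven false k = gtw k := by
  induction k with
  | zero => rfl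
  | succ k ih => rw [altEven, gtw, ih, Bool.not_false]

theorem sh_singleton_altOdd_sub (q : F) (hq : q ≠ 0) (a : Bool) (k : ℕ) :
    sh q [!a] (altOdd a k) - sh q (altOdd a k) [!a] =
      (1 - q⁻¹ ^ 2) • ((Finsupp.single (altEven (!a) (k + 1)) 1 : V F) -
        Finsupp.single (altEven a (k + 1)) 1) := by
  induction k with
  | zero =>
    simp only [altOdd, altEven, sh_cons_singleton, sh_nil_left, lmul_single, wsum_singleton,
      pr_not_left, pr_not_right, Bool.not_not, zpow_neg, zpow_two]
    match_scalars <;> ring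
  | succ k ih =>
    rw [sub_eq_iff_eq_add'] at ih
    simp only [altOdd, altEven_succ, sh_singleton_cons, sh_cons_singleton, wsum_cons,
      wsum_altOdd_not, pr_self, pr_not_left, pr_not_right, lmul_eq_lmapDomain, ih, map_add, map_sub,
      map_smul, Finsupp.lmapDomain_apply, Finsupp.mapDomain_single, Bool.not_not]
    simp only [add_neg_cancel, add_zero, zpow_zero, one_smul, zpow_neg, zpow_two]
    match_scalars <;> field_simp <;> ring

end QShuffle

open QShuffle in
theorem stmt_1_general {F : Type*} [Field F] (q : F) (hq : q ≠ 0) (k : ℕ) :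
    st q (Wm F 0) (Wp F k) - st q (Wp F k) (Wm F 0)
        = (1 - (q⁻¹) ^ 2) • (Gt F (k + 1) - Gn F (k + 1)) ∧
    st q (Wm F k) (Wp F 0) - st q (Wp F 0) (Wm F k)
        = (1 - (q⁻¹) ^ 2) • (Gt F (k + 1) - Gn F (k + 1)) := by
  have hy := sh_singleton_altOdd_sub q hq true k
  have hx := sh_singleton_altOdd_sub q hq false k
  rw [Bool.not_true, altOdd_true, altEven_true, altEven_false] at hy
  rw [Bool.not_false, altOdd_false, altEven_true, altEven_false] at hx
  simp only [Wm, Wp, Gt, Gn, altX, altY, st_single_one]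
  refine ⟨hy, ?_⟩
  rw [← neg_sub, hx, ← smul_neg, neg_sub]

/-- `[W₀, W_{k+1}] = [W_{−k}, W₁] = (1−q⁻²)(G̃_{k+1} − G_{k+1})`. -/
theorem stmt_1 {F : Type*} [Field F] (q : F) (hq : q ≠ 0)
    (hq' : ∀ n : ℕ, 0 < n → q ^ n ≠ 1) (k : ℕ) :
    st q (Wm F 0) (Wp F k) - st q (Wp F k) (Wm F 0)
        = (1 - (q⁻¹) ^ 2) • (Gt F (k + 1) - Gn F (k + 1)) ∧
    st q (Wm F k) (Wp F 0) - st q (Wp F 0) (Wm F k)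
        = (1 - (q⁻¹) ^ 2) • (Gt F (k + 1) - Gn F (k + 1)) :=
  stmt_1_general q hq k
end
end

section
/- In the q-shuffle algebra V, for all k ∈ ℕ: [W₀, G_{k+1}]_{q,⋆} = [G̃_{k+1}, W₀]_{q,⋆} = (q − q⁻¹) W_{−k−1}, where [a,b]_{q,⋆} = q a⋆b − q⁻¹ b⋆a. -/
noncomputable section

variable {F : Type*} [Field F]

section Aux

variable {F : Type*} [Field F]

lemma lmul_single' (a : Bool) (w : Wd) (c : F) :
    lmul a (Finsupp.single w c) = Finsupp.single (a :: w) c :=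
  Finsupp.mapDomain_single

lemma lmul_add' (a : Bool) (f g : V F) : lmul a (f + g) = lmul a f + lmul a g :=
  Finsupp.mapDomain_add

lemma lmul_smul' (a : Bool) (c : F) (f : V F) : lmul a (c • f) = c • lmul a f :=
  Finsupp.mapDomain_smul c f

lemma pr_ff' : pr false false = 2 := rfl
lemma pr_ft' : pr false true = -2 := rfl
lemma pr_tf' : pr true false = -2 := rfl
lemma pr_tt' : pr true true = 2 := rfl

lemma wsum_nil' (b : Bool) : wsum [] b = 0 := rfl

lemma wsum_cons' (a : Bool) (u : Wd) (b : Bool) :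
    wsum (a :: u) b = pr a b + wsum u b := by simp [wsum]

lemma wsum_gw' (k : ℕ) : wsum (gw k) false = 0 := by
  induction k with
  | zero => rfl
  | succ k ih => simp [gw, wsum_cons', ih, pr]

lemma wsum_gtw' (k : ℕ) : wsum (gtw k) false = 0 := by
  induction k with
  | zero => rfl
  | succ k ih => simp [gtw, wsum_cons', ih, pr]

lemma altX_eq' (k : ℕ) : altX k = false :: gw k := by
  induction k with
  | zero => rfl
  | succ k ih => simp [altX, gw, ih]

lemma st_ss' (q : F) (u v : Wd) :
    st q (Finsupp.single u 1) (Finsupp.single v 1) = sh q u v := by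
  unfold st
  rw [Finsupp.sum_single_index, Finsupp.sum_single_index] <;> simp

lemma key1' (q : F) (hq : q ≠ 0) (k : ℕ) :
    q • sh q [false] (gw k) - q⁻¹ • sh q (gw k) [false]
      = (q - q⁻¹) • (Finsupp.single (altX k) 1 : V F) := by
  induction k with
  | zero => simp [gw, sh, altX, sub_smul]
  | succ k ih =>
    have hA : sh q [false] (gw k)
        = q⁻¹ • ((q - q⁻¹) • (Finsupp.single (altX k) 1 : V F)
            + q⁻¹ • sh q (gw k) [false]) := by
      rw [← sub_eq_iff_eq_add.mp ih, smul_smul, inv_mul_cancel₀ hq, one_smul]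
    simp only [gw, sh]
    rw [hA]
    simp only [wsum_cons', wsum_nil', wsum_gw', pr_ff', pr_ft', pr_tf', pr_tt', altX_eq', gw,
      lmul_add', lmul_smul', lmul_single', smul_add, smul_smul, smul_sub]
    norm_num only [zpow_ofNat, zpow_neg, zpow_zero]
    match_scalars <;> field_simp <;> ring

lemma key2' (q : F) (hq : q ≠ 0) (k : ℕ) :
    q • sh q (gtw k) [false] - q⁻¹ • sh q [false] (gtw k)
      = (q - q⁻¹) • (Finsupp.single (altX k) 1 : V F) := by
  induction k with
  | zero => simp [gtw, sh, altX, sub_smul]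
  | succ k ih =>
    have hE : sh q (gtw k) [false]
        = q⁻¹ • ((q - q⁻¹) • (Finsupp.single (altX k) 1 : V F)
            + q⁻¹ • sh q [false] (gtw k)) := by
      rw [← sub_eq_iff_eq_add.mp ih, smul_smul, inv_mul_cancel₀ hq, one_smul]
    simp only [gtw, sh]
    rw [hE]
    simp only [wsum_cons', wsum_nil', wsum_gtw', pr_ff', pr_ft', pr_tf', pr_tt', altX,
      lmul_add', lmul_smul', lmul_single', smul_add, smul_smul, smul_sub]
    norm_num only [zpow_ofNat, zpow_neg, zpow_zero]
    match_scalars <;> field_simp <;> ring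

end Aux

/-- `[W₀, G_{k+1}]_q = [G̃_{k+1}, W₀]_q = (q − q⁻¹) W_{−k−1}`. -/
theorem stmt_2 {F : Type*} [Field F] (q : F) (hq : q ≠ 0)
    (hq' : ∀ n : ℕ, 0 < n → q ^ n ≠ 1) (k : ℕ) :
    q • st q (Wm F 0) (Gn F (k + 1)) - q⁻¹ • st q (Gn F (k + 1)) (Wm F 0)
        = (q - q⁻¹) • Wm F (k + 1) ∧
    q • st q (Gt F (k + 1)) (Wm F 0) - q⁻¹ • st q (Wm F 0) (Gt F (k + 1))
        = (q - q⁻¹) • Wm F (k + 1) := by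
  have h0 : (Wm F 0 : V F) = Finsupp.single [false] 1 := rfl
  constructor
  · rw [h0, Gn, st_ss', st_ss', Wm]
    exact key1' q hq (k + 1)
  · rw [h0, Gt, st_ss', st_ss', Wm]
    exact key2' q hq (k + 1)
end
end

section
/- In the q-shuffle algebra V, for all k ∈ ℕ: [G_{k+1}, W₁]_{q,⋆} = [W₁, G̃_{k+1}]_{q,⋆} = (q − q⁻¹) W_{k+2}, where [a,b]_{q,⋆} = q a⋆b − q⁻¹ b⋆a. -/
noncomputable section

variable {F : Type*} [Field F]

-- AUX START
namespace ShuffleAux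

variable {F : Type*} [Field F]

lemma sh_nil_left (q : F) (v : Wd) : sh q [] v = Finsupp.single v 1 := by rw [sh]

lemma sh_nil_right (q : F) (a : Bool) (u : Wd) :
    sh q (a :: u) [] = Finsupp.single (a :: u) 1 := by rw [sh]

lemma sh_cons (q : F) (a b : Bool) (u v : Wd) : sh q (a :: u) (b :: v) =
    lmul a (sh q u (b :: v)) + q ^ wsum (a :: u) b • lmul b (sh q (a :: u) v) := by rw [sh]

lemma lmul_single (a : Bool) (w : Wd) (c : F) :
    lmul a (Finsupp.single w c) = Finsupp.single (a :: w) c := Finsupp.mapDomain_single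

lemma lmul_add (a : Bool) (f g : V F) : lmul a (f + g) = lmul a f + lmul a g :=
  Finsupp.mapDomain_add

lemma lmul_sub (a : Bool) (f g : V F) : lmul a (f - g) = lmul a f - lmul a g := by
  unfold lmul; exact (Finsupp.mapDomain.addMonoidHom (M := F) fun w => a :: w).map_sub f g

lemma lmul_smul (a : Bool) (c : F) (f : V F) : lmul a (c • f) = c • lmul a f :=
  Finsupp.mapDomain_smul c f

lemma st_single (q : F) (u v : Wd) :
    st q (Finsupp.single u (1 : F)) (Finsupp.single v (1 : F)) = sh q u v := by
  unfold st
  rw [Finsupp.sum_single_index, Finsupp.sum_single_index] <;> simp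

lemma wsum_nil (b : Bool) : wsum [] b = 0 := rfl

lemma wsum_cons (a : Bool) (u : Wd) (b : Bool) :
    wsum (a :: u) b = pr a b + wsum u b := by simp [wsum]

lemma wsum_gw (k : ℕ) : wsum (gw k) true = 0 := by
  induction k with
  | zero => simp [gw, wsum]
  | succ k ih => simp [gw, wsum_cons, ih, pr]

lemma wsum_gtw (k : ℕ) : wsum (gtw k) true = 0 := by
  induction k with
  | zero => simp [gtw, wsum]
  | succ k ih => simp [gtw, wsum_cons, ih, pr]

lemma altY_eq (k : ℕ) : altY k = true :: gtw k := by
  induction k with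
  | zero => simp [altY, gtw]
  | succ k ih => simp [altY, gtw, ih]

lemma key1 (q : F) (hq : q ≠ 0) (k : ℕ) :
    q • sh q (gw k) [true] - q⁻¹ • sh q [true] (gw k)
      = (q - q⁻¹) • (Finsupp.single (altY k) 1 : V F) := by
  induction k with
  | zero =>
      rw [show gw 0 = [] from rfl, sh_nil_left, sh_nil_right, show altY 0 = [true] from rfl,
        sub_smul]
  | succ k ih =>
      have hB : sh q [true] (gw k)
          = q • (q • sh q (gw k) [true] - (q - q⁻¹) • (Finsupp.single (altY k) 1 : V F)) := by
        rw [← ih, sub_sub_cancel, smul_smul, mul_inv_cancel₀ hq, one_smul]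
      rw [show gw (k + 1) = true :: false :: gw k from rfl,
        show altY (k + 1) = true :: false :: altY k from rfl]
      simp only [sh_cons, sh_nil_left, sh_nil_right]
      rw [hB]
      simp only [wsum_cons, wsum_nil, wsum_gw, pr, if_pos rfl, eq_self_iff_true, if_true,
        if_neg (by decide : ¬ (true = false)), if_neg (by decide : ¬ (false = true)),
        lmul_add, lmul_sub, lmul_smul, lmul_single, smul_add, smul_sub, smul_smul]
      norm_num only [Int.reduceNeg, Int.reduceAdd]
      simp only [zpow_zero, one_smul, zpow_neg, zpow_two, zpow_ofNat]
      match_scalars <;> field_simp <;> ring_nf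

lemma key2 (q : F) (hq : q ≠ 0) (k : ℕ) :
    q • sh q [true] (gtw k) - q⁻¹ • sh q (gtw k) [true]
      = (q - q⁻¹) • (Finsupp.single (true :: gtw k) 1 : V F) := by
  induction k with
  | zero =>
      rw [show gtw 0 = [] from rfl, sh_nil_left, sh_nil_right, sub_smul]
  | succ k ih =>
      have hB : sh q (gtw k) [true]
          = q • (q • sh q [true] (gtw k)
              - (q - q⁻¹) • (Finsupp.single (true :: gtw k) 1 : V F)) := by
        rw [← ih, sub_sub_cancel, smul_smul, mul_inv_cancel₀ hq, one_smul]
      rw [show gtw (k + 1) = false :: true :: gtw k from rfl]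
      simp only [sh_cons, sh_nil_left, sh_nil_right]
      rw [hB]
      simp only [wsum_cons, wsum_nil, wsum_gtw, pr, if_pos rfl, eq_self_iff_true, if_true,
        if_neg (by decide : ¬ (true = false)), if_neg (by decide : ¬ (false = true)),
        lmul_add, lmul_sub, lmul_smul, lmul_single, smul_add, smul_sub, smul_smul]
      norm_num only [Int.reduceNeg, Int.reduceAdd]
      simp only [zpow_zero, one_smul, zpow_neg, zpow_two, zpow_ofNat]
      match_scalars <;> field_simp <;> ring_nf

end ShuffleAux
-- AUX END

/-- `[G_{k+1}, W₁]_q = [W₁, G̃_{k+1}]_q = (q − q⁻¹) W_{k+2}`. -/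
theorem stmt_3 {F : Type*} [Field F] (q : F) (hq : q ≠ 0)
    (hq' : ∀ n : ℕ, 0 < n → q ^ n ≠ 1) (k : ℕ) :
    q • st q (Gn F (k + 1)) (Wp F 0) - q⁻¹ • st q (Wp F 0) (Gn F (k + 1))
        = (q - q⁻¹) • Wp F (k + 1) ∧
    q • st q (Wp F 0) (Gt F (k + 1)) - q⁻¹ • st q (Gt F (k + 1)) (Wp F 0)
        = (q - q⁻¹) • Wp F (k + 1) := by
  constructor
  · simp only [Gn, Wp, show altY 0 = [true] from rfl, ShuffleAux.st_single]
    exact ShuffleAux.key1 q hq (k + 1)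
  · simp only [Gt, Wp, show altY 0 = [true] from rfl, ShuffleAux.st_single,
      ShuffleAux.altY_eq]
    exact ShuffleAux.key2 q hq (k + 1)
end
end
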